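/- arXiv:0906.0545 — 5 statements merged into one kernel-verified Lean document; each statement's English description precedes it below -/
import Mathlib

section
/- For all positive integers f, q and every natural number k, the identity ∑_{i=0}^{k} i(i−1) · C(f−1+i, f−1) · C(q−1+k−i, q−1) = f(f+1) · C(f+q+k−1, f+q+1) holds, where C(a,b) denotes the binomial coefficient. -/
/-!
Absorbing `i(i-1)` turns the `i`-th term into `f(f+1) C(f-1+i, f+1) C(q-1+k-i, q-1)`. The sum that
remains is a Vandermonde convolution in the upper index: `i ↦ C(c+i, a)` has generating function
`X^(a-c) / (1-X)^(a+1)` when `c ≤ a`, and multiplying two such series gives another one.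
-/

open Finset PowerSeries

theorem PowerSeries.mk_add_choose_eq_X_pow_mul_invOneSubPow {c a : ℕ} (hca : c ≤ a) :
    (mk fun i ↦ ((c + i).choose a : ℤ)) = X ^ (a - c) * (invOneSubPow ℤ (a + 1)).val := by
  ext n
  rw [coeff_mk, coeff_X_pow_mul', invOneSubPow_val_succ_eq_mk_add_choose, coeff_mk]
  split_ifs with h
  · congr 2; omega
  · rw [Nat.choose_eq_zero_of_lt (by omega), Nat.cast_zero]

namespace Nat

theorem choose_add_mul_descFactorial (n k r : ℕ) :
    n.choose (k + r) * (k + r).descFactorial r = n.choose k * (n - k).descFactorial r := by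
  induction r with
  | zero => simp
  | succ r ih =>
    calc n.choose (k + r + 1) * (k + r + 1).descFactorial (r + 1)
        = n.choose (k + r + 1) * (k + r + 1) * (k + r).descFactorial r := by
          rw [succ_descFactorial_succ, mul_assoc]
      _ = (n - k - r) * (n.choose (k + r) * (k + r).descFactorial r) := by
          rw [choose_succ_right_eq, Nat.sub_sub]; ring
      _ = n.choose k * (n - k).descFactorial (r + 1) := by
          rw [ih, descFactorial_succ]; ring

theorem sum_antidiagonal_add_choose_mul_add_choose {a b c d : ℕ} (hca : c ≤ a) (hdb : d ≤ b)
    (n : ℕ) :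
    ∑ ij ∈ antidiagonal n, (c + ij.1).choose a * (d + ij.2).choose b
      = (c + d + 1 + n).choose (a + b + 1) := by
  have key := congrArg (coeff n) (show
      (mk fun i ↦ ((c + i).choose a : ℤ)) * (mk fun i ↦ ((d + i).choose b : ℤ))
        = mk fun i ↦ ((c + d + 1 + i).choose (a + b + 1) : ℤ) by
    rw [mk_add_choose_eq_X_pow_mul_invOneSubPow hca, mk_add_choose_eq_X_pow_mul_invOneSubPow hdb,
      mk_add_choose_eq_X_pow_mul_invOneSubPow (by omega : c + d + 1 ≤ a + b + 1),
      show a + b + 1 + 1 = (a + 1) + (b + 1) by ring, invOneSubPow_add ℤ (a + 1) (b + 1),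
      Units.val_mul, show a + b + 1 - (c + d + 1) = (a - c) + (b - d) by omega, pow_add]
    ring)
  simp only [coeff_mul, coeff_mk] at key
  exact_mod_cast key

end Nat

/-- Absorption identity: for positive integers `f`, `q` and any `k`,
`∑_{i=0}^{k} i(i−1) · C(f−1+i, f−1) · C(q−1+k−i, q−1) = f(f+1) · C(f+q+k−1, f+q+1)`. -/
theorem koszul_absorption_falling_second_moment (f q : ℕ) (hf : 0 < f) (hq : 0 < q) (k : ℕ) :
    ∑ i ∈ Finset.range (k + 1),
        i * (i - 1) * Nat.choose (f - 1 + i) (f - 1) * Nat.choose (q - 1 + k - i) (q - 1)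
      = f * (f + 1) * Nat.choose (f + q + k - 1) (f + q + 1) := by
  have absorb (i : ℕ) : i * (i - 1) * (f - 1 + i).choose (f - 1)
      = f * (f + 1) * (f - 1 + i).choose (f + 1) := by
    have h := Nat.choose_add_mul_descFactorial (f - 1 + i) (f - 1) 2
    rw [show f - 1 + 2 = f + 1 by omega, Nat.add_sub_cancel_left] at h
    simp only [Nat.descFactorial_succ, Nat.descFactorial_zero, Nat.sub_zero, mul_one] at h
    rw [show f + 1 - 1 = f by omega] at h
    linarith
  calc ∑ i ∈ range (k + 1),
        i * (i - 1) * (f - 1 + i).choose (f - 1) * (q - 1 + k - i).choose (q - 1)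
      = f * (f + 1) * ∑ ij ∈ antidiagonal k,
          (f - 1 + ij.1).choose (f + 1) * (q - 1 + ij.2).choose (q - 1) := by
        rw [Nat.sum_antidiagonal_eq_sum_range_succ_mk, mul_sum]
        refine sum_congr rfl fun i hi ↦ ?_
        rw [absorb, mul_assoc, show q - 1 + k - i = q - 1 + (k - i) by
          have := mem_range.mp hi; omega]
    _ = f * (f + 1) * (f + q + k - 1).choose (f + q + 1) := by
        rw [Nat.sum_antidiagonal_add_choose_mul_add_choose (by omega) le_rfl]
        congr 2 <;> omega
end

section
/- For all positive integers f, q, setting e = f+q, and every natural number k, the identity ∑_{i=0}^{k} i² · C(f−1+i, f−1) · C(q−1+k−i, q−1) = f(f+1) · C(e+k−1, e+1) + f · C(e+k−1, e) holds, where C(a,b) denotes the binomial coefficient. -/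
/-!
Absorption rewrites `i² · C(a+i, a)` as `(a+1)(a+2) · C(a+i, a+2) + (a+1) · C(a+i, a+1)`, so the
sum splits into two convolutions `∑ C(a+i, r) · C(b+k-i, b)`. These are instances of the
upper-index Chu–Vandermonde identity, which is ordinary Vandermonde convolution evaluated at the
negative integers `-(a+1)`, `-(b+1)`, since `C(-(a+1), i) = (-1)^i · C(a+i, a)`.
-/

open Finset

theorem Ring.choose_neg_natCast_succ (a i : ℕ) :
    Ring.choose (-((a + 1 : ℕ) : ℤ)) i = (-1) ^ i * ((a + i).choose a : ℤ) := by
  rw [Ring.choose_neg, Units.smul_def, Int.coe_negOnePow_natCast, smul_eq_mul,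
    show ((a + 1 : ℕ) : ℤ) + i - 1 = ((a + i : ℕ) : ℤ) by push_cast; ring,
    Ring.choose_natCast, Nat.choose_symm_add]

theorem Nat.sum_antidiagonal_add_choose_mul_add_choose_s2 (a b n : ℕ) :
    ∑ ij ∈ antidiagonal n, (a + ij.1).choose a * (b + ij.2).choose b
      = (a + b + 1 + n).choose (a + b + 1) := by
  have h := Ring.add_choose_eq (R := ℤ) (r := -((a + 1 : ℕ) : ℤ)) (s := -((b + 1 : ℕ) : ℤ)) n
    (Commute.all _ _)
  rw [← neg_add, ← Nat.cast_add, show a + 1 + (b + 1) = (a + b + 1) + 1 by omega] at h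
  have hsum : ∑ ij ∈ antidiagonal n, (-1 : ℤ) ^ ij.1 * ((a + ij.1).choose a : ℤ) *
      ((-1) ^ ij.2 * ((b + ij.2).choose b : ℤ))
      = (-1) ^ n * ∑ ij ∈ antidiagonal n, ((a + ij.1).choose a * (b + ij.2).choose b : ℤ) := by
    rw [mul_sum]
    refine sum_congr rfl fun ij hij => ?_
    rw [← mem_antidiagonal.1 hij, pow_add]
    ring
  simp only [Ring.choose_neg_natCast_succ, hsum] at h
  exact_mod_cast (mul_right_injective₀ (pow_ne_zero n (by norm_num : (-1 : ℤ) ≠ 0)) h).symm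

theorem Nat.sum_range_add_choose_mul_add_choose {m r : ℕ} (hmr : m ≤ r) (b n : ℕ) :
    ∑ i ∈ range (n + 1), (m + i).choose r * (b + (n - i)).choose b
      = (m + n + b + 1).choose (r + b + 1) := by
  obtain ⟨d, rfl⟩ := Nat.exists_eq_add_of_le hmr
  rcases lt_or_ge n d with hnd | hdn
  · rw [Nat.choose_eq_zero_of_lt (by omega)]
    exact sum_eq_zero fun i hi =>
      by rw [Nat.choose_eq_zero_of_lt (by simp at hi; omega), zero_mul]
  obtain ⟨t, rfl⟩ := Nat.exists_eq_add_of_le hdn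
  rw [show d + t + 1 = d + (t + 1) by omega, sum_range_add,
    sum_eq_zero fun i hi => by rw [Nat.choose_eq_zero_of_lt (by simp at hi; omega), zero_mul],
    zero_add]
  calc ∑ i ∈ range (t + 1), (m + (d + i)).choose (m + d) * (b + (d + t - (d + i))).choose b
      = ∑ ij ∈ antidiagonal t, (m + d + ij.1).choose (m + d) * (b + ij.2).choose b := by
        rw [Nat.sum_antidiagonal_eq_sum_range_succ
          (fun i j => (m + d + i).choose (m + d) * (b + j).choose b)]
        refine sum_congr rfl fun i _ => ?_
        rw [← add_assoc, Nat.add_sub_add_left]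
    _ = (m + (d + t) + b + 1).choose (m + d + b + 1) := by
        rw [Nat.sum_antidiagonal_add_choose_mul_add_choose_s2]
        congr 1
        omega

theorem Nat.sq_mul_add_choose (a i : ℕ) :
    i ^ 2 * (a + i).choose a
      = (a + 1) * (a + 2) * (a + i).choose (a + 2) + (a + 1) * (a + i).choose (a + 1) := by
  rcases i with _ | i
  · simp [Nat.choose_eq_zero_of_lt]
  set N := a + (i + 1)
  have h1 : N.choose (a + 1) * (a + 1) = N.choose a * (i + 1) := by
    rw [Nat.choose_succ_right_eq, Nat.add_sub_cancel_left]
  have h2 : N.choose (a + 2) * (a + 2) = N.choose (a + 1) * i := by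
    rw [Nat.choose_succ_right_eq, show N - (a + 1) = i by omega]
  calc (i + 1) ^ 2 * N.choose a = (i + 1) * (N.choose a * (i + 1)) := by ring
    _ = (a + 1) * (N.choose (a + 1) * i + N.choose (a + 1)) := by rw [← h1]; ring
    _ = (a + 1) * (a + 2) * N.choose (a + 2) + (a + 1) * N.choose (a + 1) := by rw [← h2]; ring

/-- For positive integers `f`, `q`, with `e = f+q`, and any `k`,
`∑_{i=0}^{k} i² · C(f−1+i, f−1) · C(q−1+k−i, q−1) = f(f+1)·C(e+k−1, e+1) + f·C(e+k−1, e)`. -/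
theorem koszul_absorption_second_moment (f q : ℕ) (hf : 0 < f) (hq : 0 < q) (k : ℕ) :
    ∑ i ∈ Finset.range (k + 1),
        i ^ 2 * Nat.choose (f - 1 + i) (f - 1) * Nat.choose (q - 1 + k - i) (q - 1)
      = f * (f + 1) * Nat.choose (f + q + k - 1) (f + q + 1)
        + f * Nat.choose (f + q + k - 1) (f + q) := by
  obtain ⟨a, rfl⟩ := Nat.exists_eq_add_of_lt hf
  obtain ⟨b, rfl⟩ := Nat.exists_eq_add_of_lt hq
  simp only [zero_add, Nat.add_sub_cancel]
  calc ∑ i ∈ range (k + 1), i ^ 2 * (a + i).choose a * (b + k - i).choose b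
      = ∑ i ∈ range (k + 1), ((a + 1) * (a + 2) * ((a + i).choose (a + 2) * (b + (k - i)).choose b)
          + (a + 1) * ((a + i).choose (a + 1) * (b + (k - i)).choose b)) := by
        refine sum_congr rfl fun i hi => ?_
        rw [Nat.add_sub_assoc (by simpa [Nat.lt_succ_iff] using hi), Nat.sq_mul_add_choose]
        ring
    _ = _ := by
        rw [sum_add_distrib, ← mul_sum, ← mul_sum,
          Nat.sum_range_add_choose_mul_add_choose (by omega),
          Nat.sum_range_add_choose_mul_add_choose (by omega)]
        congr 3 <;> omega
end

section
/- Let f, q be positive integers, e = f+q, and let μ_F, μ_Q, g be rational numbers. For every natural number k, −∑_{i=0}^{k} i · C(f−1+i, f−1) · C(q−1+k−i, q−1) · (−i·μ_F − (k−i)·μ_Q + 1 − g) = (f(f+1)·μ_F + f·q·μ_Q) · C(e+k−1, e+1) + (μ_F − (1−g)) · f · C(e+k−1, e). -/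
/-!
Write `f = a + 1`, `q = b + 1`. The number `C(a + i, a)` is the `i`-th coefficient of
`(1 - X)⁻¹ ^ (a + 1)`, and `C(i, r) · C(a + i, a)` is the `i`-th coefficient of
`C(a + r, r) · X ^ r · (1 - X)⁻¹ ^ (a + r + 1)`. Multiplying two such series gives the weighted
Vandermonde convolution
`∑_{i + j = n} C(i, r) C(j, s) C(a + i, a) C(b + j, b)
  = C(a + r, r) C(b + s, s) C(a + b + 1 + n, a + b + 1 + r + s)`.
The summand of the theorem is a combination of the weights `i² = 2 C(i, 2) + i`, `i j` and `i`,
so the cases `(r, s) = (2, 0), (1, 1), (1, 0)` give the closed form.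
-/

open Finset PowerSeries

theorem Nat.choose_mul_add_choose_eq (a r m : ℕ) :
    (r + m).choose r * (a + (r + m)).choose a = (a + r).choose r * (a + r + m).choose (a + r) := by
  have h := Nat.choose_mul (n := a + r + m) (k := a + r) (s := a) (Nat.le_add_right a r)
  rw [show a + r + m - a = r + m by omega, Nat.add_sub_cancel_left,
    Nat.choose_symm_add (a := a)] at h
  rw [← add_assoc, mul_comm, ← h, mul_comm]

namespace PowerSeries

variable {S : Type*} [CommRing S]

theorem coeff_X_pow_mul_mk_one_pow (c r n : ℕ) :
    coeff n (X ^ r * (mk 1 : S⟦X⟧) ^ (c + r + 1)) = ((c + n).choose (c + r) : S) := by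
  rw [coeff_X_pow_mul', mk_one_pow_eq_mk_choose_add]
  split_ifs with h
  · obtain ⟨m, rfl⟩ := Nat.exists_eq_add_of_le h
    rw [coeff_mk, Nat.add_sub_cancel_left, ← add_assoc]
  · simp [Nat.choose_eq_zero_of_lt (Nat.add_lt_add_left (not_le.mp h) c)]

theorem mk_choose_mul_add_choose (a r : ℕ) :
    (mk fun i ↦ ((i.choose r * (a + i).choose a : ℕ) : S)) =
      (a + r).choose r • (X ^ r * (mk 1 : S⟦X⟧) ^ (a + r + 1)) := by
  ext n
  rw [map_nsmul, coeff_X_pow_mul', mk_one_pow_eq_mk_choose_add, coeff_mk]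
  split_ifs with h
  · obtain ⟨m, rfl⟩ := Nat.exists_eq_add_of_le h
    rw [coeff_mk, Nat.add_sub_cancel_left, nsmul_eq_mul, Nat.choose_mul_add_choose_eq]
    push_cast
    rfl
  · simp [Nat.choose_eq_zero_of_lt (not_le.mp h)]

end PowerSeries

theorem Nat.sum_antidiagonal_choose_mul_add_choose (a b r s n : ℕ) :
    ∑ p ∈ antidiagonal n, p.1.choose r * (a + p.1).choose a * (p.2.choose s * (b + p.2).choose b) =
      (a + r).choose r * (b + s).choose s * (a + b + 1 + n).choose (a + b + 1 + r + s) := by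
  apply Nat.cast_injective (R := ℤ)
  have h := congrArg (coeff n) (congrArg₂ (· * ·) (mk_choose_mul_add_choose (S := ℤ) a r)
    (mk_choose_mul_add_choose b s))
  rw [coeff_mul] at h
  simp only [coeff_mk] at h
  have hprod : X ^ r * (PowerSeries.mk 1 : ℤ⟦X⟧) ^ (a + r + 1) *
      (X ^ s * (PowerSeries.mk 1) ^ (b + s + 1)) =
      X ^ (r + s) * (PowerSeries.mk 1) ^ (a + b + 1 + (r + s) + 1) := by ring
  push_cast at h ⊢
  rw [h, smul_mul_smul_comm, hprod, map_nsmul, coeff_X_pow_mul_mk_one_pow, nsmul_eq_mul,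
    ← add_assoc]
  push_cast
  ring

section Moments

variable (a b n : ℕ)

theorem sum_antidiagonal_fst_mul_choose_mul_choose :
    ∑ p ∈ antidiagonal n, (p.1 : ℚ) * (a + p.1).choose a * (b + p.2).choose b =
      (a + 1) * (a + b + 1 + n).choose (a + b + 2) := by
  have h := congrArg (Nat.cast : ℕ → ℚ) (Nat.sum_antidiagonal_choose_mul_add_choose a b 1 0 n)
  simp only [Nat.choose_one_right, Nat.choose_zero_right, one_mul, mul_one, add_zero] at h
  push_cast at h
  linear_combination h

theorem sum_antidiagonal_fst_mul_snd_mul_choose_mul_choose :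
    ∑ p ∈ antidiagonal n, (p.1 : ℚ) * p.2 * (a + p.1).choose a * (b + p.2).choose b =
      (a + 1) * (b + 1) * (a + b + 1 + n).choose (a + b + 3) := by
  have h := congrArg (Nat.cast : ℕ → ℚ) (Nat.sum_antidiagonal_choose_mul_add_choose a b 1 1 n)
  simp only [Nat.choose_one_right] at h
  push_cast at h
  rw [← h]
  exact sum_congr rfl fun p _ ↦ by ring

theorem sum_antidiagonal_fst_sq_mul_choose_mul_choose :
    ∑ p ∈ antidiagonal n, (p.1 : ℚ) ^ 2 * (a + p.1).choose a * (b + p.2).choose b =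
      (a + 1) * (a + 2) * (a + b + 1 + n).choose (a + b + 3) +
        (a + 1) * (a + b + 1 + n).choose (a + b + 2) := by
  have h := congrArg (Nat.cast : ℕ → ℚ) (Nat.sum_antidiagonal_choose_mul_add_choose a b 2 0 n)
  simp only [Nat.choose_zero_right, one_mul, mul_one, add_zero] at h
  push_cast [Nat.cast_choose_two] at h
  have hsplit : ∀ p ∈ antidiagonal n, (p.1 : ℚ) ^ 2 * (a + p.1).choose a * (b + p.2).choose b =
      2 * (p.1 * (p.1 - 1) / 2 * (a + p.1).choose a * (b + p.2).choose b) +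
        p.1 * (a + p.1).choose a * (b + p.2).choose b := fun p _ ↦ by ring
  rw [sum_congr rfl hsplit, sum_add_distrib, ← mul_sum, h,
    sum_antidiagonal_fst_mul_choose_mul_choose]
  ring

end Moments

/-- The total weight of the `ℂ*`-action on `H⁰(O_{ℙ(E)}(k))` for `E = F ⊕ Q`:
`−∑_{i=0}^{k} i·C(f−1+i,f−1)·C(q−1+k−i,q−1)·(−i·μF − (k−i)·μQ + 1 − g)
  = (f(f+1)·μF + f·q·μQ)·C(e+k−1, e+1) + (μF − (1−g))·f·C(e+k−1, e)`, where `e = f+q`. -/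
theorem total_weight_closed_form (f q : ℕ) (hf : 0 < f) (hq : 0 < q)
    (μF μQ g : ℚ) (k : ℕ) :
    -(∑ i ∈ Finset.range (k + 1),
        (i : ℚ) * (Nat.choose (f - 1 + i) (f - 1) : ℚ) *
          (Nat.choose (q - 1 + k - i) (q - 1) : ℚ) *
          (-(i : ℚ) * μF - ((k : ℚ) - (i : ℚ)) * μQ + 1 - g))
      = ((f : ℚ) * ((f : ℚ) + 1) * μF + (f : ℚ) * (q : ℚ) * μQ) *
          (Nat.choose (f + q + k - 1) (f + q + 1) : ℚ)
        + (μF - (1 - g)) * (f : ℚ) * (Nat.choose (f + q + k - 1) (f + q) : ℚ) := by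
  obtain ⟨a, rfl⟩ : ∃ a, f = a + 1 := ⟨f - 1, by omega⟩
  obtain ⟨b, rfl⟩ : ∃ b, q = b + 1 := ⟨q - 1, by omega⟩
  have hsum : ∑ i ∈ range (k + 1), (i : ℚ) * (a + 1 - 1 + i).choose (a + 1 - 1) *
        (b + 1 - 1 + k - i).choose (b + 1 - 1) * (-(i : ℚ) * μF - ((k : ℚ) - i) * μQ + 1 - g) =
      ∑ p ∈ antidiagonal k, -(μF * ((p.1 : ℚ) ^ 2 * (a + p.1).choose a * (b + p.2).choose b) +
        μQ * ((p.1 : ℚ) * p.2 * (a + p.1).choose a * (b + p.2).choose b) -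
        (1 - g) * ((p.1 : ℚ) * (a + p.1).choose a * (b + p.2).choose b)) := by
    rw [Nat.sum_antidiagonal_eq_sum_range_succ_mk]
    refine sum_congr rfl fun i hi ↦ ?_
    have hik : i ≤ k := Nat.lt_succ_iff.mp (mem_range.mp hi)
    simp only [Nat.add_sub_cancel]
    rw [Nat.add_sub_assoc hik, Nat.cast_sub hik]
    ring
  rw [hsum, sum_neg_distrib, neg_neg, sum_sub_distrib, sum_add_distrib, ← mul_sum, ← mul_sum,
    ← mul_sum, sum_antidiagonal_fst_sq_mul_choose_mul_choose,
    sum_antidiagonal_fst_mul_snd_mul_choose_mul_choose, sum_antidiagonal_fst_mul_choose_mul_choose,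
    show a + 1 + (b + 1) + k - 1 = a + b + 1 + k by omega,
    show a + 1 + (b + 1) + 1 = a + b + 3 by ring, show a + 1 + (b + 1) = a + b + 2 by ring]
  push_cast
  ring
end

section
/- Let p be a polynomial over ℚ with deg p ≤ n and let α = coeff_n(p) be its coefficient of x^n. Let r ≤ n be a positive integer and m_1, …, m_r positive integers. Then the weighted Koszul alternating sum K'(p) := ∑_{S ⊆ {1,…,r}} (−1)^{|S|} · σ_S · p(x − σ_S), where σ_S = ∑_{i∈S} m_i, is a polynomial of degree ≤ n − r + 1 whose coefficient of x^{n−r+1} equals −(n! · r/(n−r+1)!) · α · ∏_{i=1}^{r} m_i. -/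
/-!
Write `Δ_c q = q - q(X - c)`. The unweighted Koszul sum `K(q) = ∑_S (-1)^|S| q(X - σ_S)` is the
composite of the commuting operators `Δ_{m_i}`, and each `Δ_c` lowers the degree by one while
multiplying the top coefficient by `deg · c`; hence for `deg q ≤ d` the polynomial `K(q)` has
degree `≤ d - r` and top coefficient `d (d-1) ⋯ (d-r+1) · ∏ m_i · coeff_d q`. Since
`σ_S q(X - σ_S) = X q(X - σ_S) - (X q)(X - σ_S)`, the weighted sum is `X K(p) - K(X p)`, and
the difference of the two descending factorials is `-n! r / (n-r+1)!`.
-/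

open Polynomial

theorem Nat.cast_descFactorial_sub_cast_succ_descFactorial {K : Type*} [Field K] [CharZero K]
    {n r : ℕ} (h : r ≤ n) :
    (n.descFactorial r : K) - (n + 1).descFactorial r =
      -(n.factorial * r / (n - r + 1).factorial : K) := by
  have hsucc :
      ((n - r + 1 : ℕ) : K) * (n + 1).descFactorial r = (n + 1 : ℕ) * n.descFactorial r := by
    rw [show n - r + 1 = n + 1 - r by omega]
    exact_mod_cast Nat.succ_descFactorial n r
  rw [← neg_div, eq_div_iff (Nat.cast_ne_zero.2 (Nat.factorial_ne_zero _)), Nat.factorial_succ,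
    ← Nat.factorial_mul_descFactorial h]
  push_cast [Nat.cast_sub h] at hsucc ⊢
  linear_combination (-((n - r).factorial : K)) * hsucc

namespace Polynomial

open Finset

variable {R : Type*} [CommRing R]

theorem coeff_taylor_eq_sum_range {q : R[X]} {n k : ℕ} (hq : q.natDegree ≤ n) (hk : k ≤ n)
    (r : R) : (taylor r q).coeff k =
      ∑ i ∈ range (n + 1 - k), ((i + k).choose k : R) * q.coeff (i + k) * r ^ i := by
  have hdeg : (hasseDeriv k q).natDegree < n + 1 - k := by
    have := natDegree_hasseDeriv_le q k
    omega
  simp only [taylor_coeff, eval_eq_sum_range' hdeg, hasseDeriv_coeff]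

theorem degree_X_mul_le {q : R[X]} {d : ℕ} (hq : q.degree ≤ d) :
    (X * q).degree ≤ ((d + 1 : ℕ) : WithBot ℕ) := by
  calc (X * q).degree ≤ X.degree + q.degree := degree_mul_le _ _
    _ ≤ 1 + d := add_le_add degree_X_le hq
    _ = ((d + 1 : ℕ) : WithBot ℕ) := by push_cast; rw [add_comm]

theorem comp_X_sub_C_eq_taylor (q : R[X]) (c : R) : q.comp (X - C c) = taylor (-c) q := by
  rw [taylor_apply, map_neg, sub_eq_add_neg]

theorem degree_sub_comp_X_sub_C_le {q : R[X]} {d : ℕ} (hq : q.degree ≤ (d + 1 : ℕ)) (c : R) :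
    (q - q.comp (X - C c)).degree ≤ d := by
  rw [degree_le_iff_coeff_zero]
  intro k hk
  rw [coeff_sub, comp_X_sub_C_eq_taylor]
  obtain rfl | hk : k = d + 1 ∨ d + 1 < k := by
    have : d < k := by exact_mod_cast hk
    omega
  · rw [coeff_taylor_eq_sum_range (natDegree_le_iff_degree_le.2 hq) le_rfl,
      Nat.add_sub_cancel_left]
    simp
  · have hk' : ((d + 1 : ℕ) : WithBot ℕ) < k := by exact_mod_cast hk
    rw [coeff_eq_zero_of_degree_lt (hq.trans_lt hk'),
      coeff_eq_zero_of_degree_lt ((degree_taylor q _).le.trans_lt (hq.trans_lt hk')), sub_zero]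

theorem coeff_sub_comp_X_sub_C {q : R[X]} {d : ℕ} (hq : q.degree ≤ (d + 1 : ℕ)) (c : R) :
    (q - q.comp (X - C c)).coeff d = (d + 1) * c * q.coeff (d + 1) := by
  rw [coeff_sub, comp_X_sub_C_eq_taylor,
    coeff_taylor_eq_sum_range (natDegree_le_iff_degree_le.2 hq) d.le_succ,
    show d + 1 + 1 - d = 2 by omega]
  simp only [sum_range_succ, range_one, sum_singleton, zero_add, Nat.choose_self, Nat.cast_one,
    one_mul, pow_zero, mul_one, add_comm 1 d, Nat.choose_succ_self_right, Nat.cast_add, pow_one,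
    mul_neg, sub_add_cancel_left, neg_neg]
  ring

section koszulSum

variable {ι : Type*}

noncomputable def koszulSum (s : Finset ι) (m : ι → R) (q : R[X]) : R[X] :=
  ∑ S ∈ s.powerset, (-1) ^ #S * q.comp (X - C (∑ i ∈ S, m i))

noncomputable def weightedKoszulSum (s : Finset ι) (m : ι → R) (q : R[X]) : R[X] :=
  ∑ S ∈ s.powerset, (-1) ^ #S * C (∑ i ∈ S, m i) * q.comp (X - C (∑ i ∈ S, m i))

@[simp]
theorem koszulSum_empty (m : ι → R) (q : R[X]) : koszulSum ∅ m q = q := by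
  simp [koszulSum]

theorem weightedKoszulSum_eq (s : Finset ι) (m : ι → R) (q : R[X]) :
    weightedKoszulSum s m q = X * koszulSum s m q - koszulSum s m (X * q) := by
  rw [weightedKoszulSum, koszulSum, koszulSum, mul_sum, ← sum_sub_distrib]
  refine sum_congr rfl fun S _ => ?_
  rw [mul_comp, X_comp]
  ring

variable [DecidableEq ι]

theorem koszulSum_insert {a : ι} {s : Finset ι} (ha : a ∉ s) (m : ι → R) (q : R[X]) :
    koszulSum (insert a s) m q = koszulSum s m (q - q.comp (X - C (m a))) := by
  rw [koszulSum, koszulSum, sum_powerset_insert ha, ← sum_add_distrib]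
  refine sum_congr rfl fun S hS => ?_
  have haS : a ∉ S := fun h => ha (mem_powerset.1 hS h)
  have hshift : q.comp (X - C (m a + ∑ i ∈ S, m i)) =
      (q.comp (X - C (m a))).comp (X - C (∑ i ∈ S, m i)) := by
    rw [comp_assoc, sub_comp, X_comp, C_comp, sub_sub, ← C_add, add_comm]
  rw [card_insert_of_notMem haS, sum_insert haS, hshift, sub_comp, pow_succ]
  ring

theorem degree_koszulSum_le (s : Finset ι) (m : ι → R) {q : R[X]} {d : ℕ}
    (hq : q.degree ≤ d) (hs : #s ≤ d) : (koszulSum s m q).degree ≤ (d - #s : ℕ) := by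
  induction s using Finset.induction_on generalizing q d with
  | empty => simpa using hq
  | @insert a s ha ih =>
    rw [card_insert_of_notMem ha] at hs ⊢
    obtain ⟨e, rfl⟩ : ∃ e, d = e + 1 := ⟨d - 1, by omega⟩
    rw [koszulSum_insert ha m, Nat.add_sub_add_right]
    exact ih (degree_sub_comp_X_sub_C_le hq _) (by omega)

theorem coeff_koszulSum (s : Finset ι) (m : ι → R) {q : R[X]} {d : ℕ}
    (hq : q.degree ≤ d) (hs : #s ≤ d) :
    (koszulSum s m q).coeff (d - #s) = q.coeff d * d.descFactorial #s * ∏ i ∈ s, m i := by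
  induction s using Finset.induction_on generalizing q d with
  | empty => simp
  | @insert a s ha ih =>
    rw [card_insert_of_notMem ha] at hs ⊢
    obtain ⟨e, rfl⟩ : ∃ e, d = e + 1 := ⟨d - 1, by omega⟩
    rw [koszulSum_insert ha m, Nat.add_sub_add_right,
      ih (degree_sub_comp_X_sub_C_le hq _) (by omega), coeff_sub_comp_X_sub_C hq,
      Nat.succ_descFactorial_succ, prod_insert ha]
    push_cast
    ring

theorem degree_weightedKoszulSum_le (s : Finset ι) (m : ι → R) {q : R[X]} {d : ℕ}
    (hq : q.degree ≤ d) (hs : #s ≤ d) :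
    (weightedKoszulSum s m q).degree ≤ (d - #s + 1 : ℕ) := by
  have hXq := degree_X_mul_le hq
  have hX := degree_X_mul_le (degree_koszulSum_le s m hq hs)
  have hshift := degree_koszulSum_le s m hXq (by omega)
  rw [show d + 1 - #s = d - #s + 1 by omega] at hshift
  rw [weightedKoszulSum_eq]
  exact (degree_sub_le _ _).trans (max_le hX hshift)

theorem coeff_weightedKoszulSum (s : Finset ι) (m : ι → R) {q : R[X]} {d : ℕ}
    (hq : q.degree ≤ d) (hs : #s ≤ d) : (weightedKoszulSum s m q).coeff (d - #s + 1) =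
      (d.descFactorial #s - (d + 1).descFactorial #s) * q.coeff d * ∏ i ∈ s, m i := by
  have hXq := degree_X_mul_le hq
  have hshift := coeff_koszulSum s m hXq (by omega)
  rw [show d + 1 - #s = d - #s + 1 by omega, coeff_X_mul] at hshift
  rw [weightedKoszulSum_eq, coeff_sub, coeff_X_mul, coeff_koszulSum s m hq hs, hshift]
  ring

end koszulSum

end Polynomial

theorem weighted_koszul_alternating_sum_leading_coeff_general (n r : ℕ) (hrn : r ≤ n)
    (m : Fin r → ℕ) (p : Polynomial ℚ) (hp : p.degree ≤ (n : ℕ)) :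
    (∑ S : Finset (Fin r), (-1 : Polynomial ℚ) ^ S.card *
        C ((∑ i ∈ S, m i : ℕ) : ℚ) *
        p.comp (X - C ((∑ i ∈ S, m i : ℕ) : ℚ))).degree ≤ ((n - r + 1 : ℕ) : WithBot ℕ) ∧
    (∑ S : Finset (Fin r), (-1 : Polynomial ℚ) ^ S.card *
        C ((∑ i ∈ S, m i : ℕ) : ℚ) *
        p.comp (X - C ((∑ i ∈ S, m i : ℕ) : ℚ))).coeff (n - r + 1)
      = -((n.factorial : ℚ) * (r : ℚ) / ((n - r + 1).factorial : ℚ)) * p.coeff n *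
          ∏ i, (m i : ℚ) := by
  have hK : ∑ S : Finset (Fin r), (-1 : Polynomial ℚ) ^ S.card *
      C ((∑ i ∈ S, m i : ℕ) : ℚ) * p.comp (X - C ((∑ i ∈ S, m i : ℕ) : ℚ)) =
        weightedKoszulSum Finset.univ (fun i => (m i : ℚ)) p := by
    simp only [weightedKoszulSum, Finset.powerset_univ, Nat.cast_sum]
  have hcard : (Finset.univ : Finset (Fin r)).card = r := Finset.card_fin r
  have hdeg := degree_weightedKoszulSum_le Finset.univ (fun i => (m i : ℚ)) hp (by rwa [hcard])
  have hcoeff := coeff_weightedKoszulSum Finset.univ (fun i => (m i : ℚ)) hp (by rwa [hcard])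
  rw [hcard] at hdeg hcoeff
  rw [hK, hcoeff, Nat.cast_descFactorial_sub_cast_succ_descFactorial hrn]
  exact ⟨hdeg, rfl⟩

/-- The weighted Koszul alternating sum `K'(p) = ∑_{S ⊆ {1,…,r}} (−1)^{|S|} σ_S · p(x − σ_S)`,
with `σ_S = ∑_{i∈S} m_i`, of a polynomial `p` of degree ≤ `n` has degree ≤ `n − r + 1` and
its coefficient of `x^{n−r+1}` is `−(n!·r/(n−r+1)!) · coeff_n(p) · ∏ m_i`. -/
theorem weighted_koszul_alternating_sum_leading_coeff (n r : ℕ) (hr : 0 < r) (hrn : r ≤ n)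
    (m : Fin r → ℕ) (hm : ∀ i, 0 < m i) (p : Polynomial ℚ) (hp : p.degree ≤ (n : ℕ)) :
    (∑ S : Finset (Fin r), (-1 : Polynomial ℚ) ^ S.card *
        C ((∑ i ∈ S, m i : ℕ) : ℚ) *
        p.comp (X - C ((∑ i ∈ S, m i : ℕ) : ℚ))).degree ≤ ((n - r + 1 : ℕ) : WithBot ℕ) ∧
    (∑ S : Finset (Fin r), (-1 : Polynomial ℚ) ^ S.card *
        C ((∑ i ∈ S, m i : ℕ) : ℚ) *
        p.comp (X - C ((∑ i ∈ S, m i : ℕ) : ℚ))).coeff (n - r + 1)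
      = -((n.factorial : ℚ) * (r : ℚ) / ((n - r + 1).factorial : ℚ)) * p.coeff n *
          ∏ i, (m i : ℚ) :=
  weighted_koszul_alternating_sum_leading_coeff_general n r hrn m p hp
end

section
/- Let f, q, r be positive integers with r ≤ f + q − 1, set e = f + q, let d_F, d_Q be integers, μ_F = d_F/f, μ_Q = d_Q/q, μ_E = (d_F + d_Q)/e, and let m_1, …, m_r be positive integers. For a rational number g let H_g(x) := (1/(e−1)!)·∏_{j=1}^{e−1}(x+j)·(−μ_E·x+1−g), B_m(x) := (1/m!)·∏_{j=0}^{m−1}(x+e−1−j), T_g(x) := (f(f+1)μ_F + f·q·μ_Q)·B_{e+1}(x) + (μ_F − (1−g))·f·B_e(x), and Tr_{X,g} := ∑_{S ⊆ {1,…,r}} (−1)^{|S|} ( T_g(x − σ_S) − σ_S · H_g(x − σ_S) ), where σ_S = ∑_{i∈S} m_i. Then for all rational g_1, g_2, the coefficient of x^{e−r+1} of Tr_{X,g_1} equals that of Tr_{X,g_2}, and coeff_{e−r}(Tr_{X,g_1}) − coeff_{e−r}(Tr_{X,g_2}) = (∏_{i=1}^{r} m_i) · (f − r) · (g_1 − g_2)/(e−r)!.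 -/
open Polynomial Finset
open scoped Nat

/-!
`T_g` and `H_g` depend on `g` only through a term linear in `g`, so `Tr_{X,g₁} − Tr_{X,g₂}` is
`(g₁ − g₂) (f Δ B_e + W P)` with `P = ∏_{j<e−1} (x + j + 1) / (e − 1)!`,
`Δ p = ∑_S (−1)^|S| p(x − σ_S)` and `W p = ∑_S (−1)^|S| σ_S p(x − σ_S) = x Δ p − Δ (x p)`.
`Δ` is a composition of `r` backward differences `p ↦ p − p(x − m_i)`, each of which lowers the
degree by one and multiplies the top coefficient by `m_i` times the degree; so `Δ` sends a
polynomial of degree `≤ n` with top coefficient `1/n!` to one of degree `≤ n − r` with top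
coefficient `(∏ m_i)/(n − r)!`. Hence both `f Δ B_e` and `W P` have degree `≤ e − r`, with top
coefficients `f ∏ m_i/(e − r)!` and `−r ∏ m_i/(e − r)!`.
-/

namespace Polynomial

section Taylor

variable {R : Type*} [CommRing R]

lemma coeff_taylor_of_natDegree_le {p : R[X]} {n k : ℕ} (hp : p.natDegree ≤ n) (hk : n ≤ k)
    (c : R) : (taylor c p).coeff k = p.coeff k := by
  have hdeg : (hasseDeriv k p).natDegree = 0 :=
    Nat.eq_zero_of_le_zero ((natDegree_hasseDeriv_le p k).trans (by omega))
  rw [taylor_coeff, eq_C_of_natDegree_eq_zero hdeg, eval_C, hasseDeriv_coeff]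
  simp

lemma coeff_taylor_pred_of_natDegree_le {p : R[X]} {n : ℕ} (hp : p.natDegree ≤ n) (c : R) :
    (taylor c p).coeff (n - 1) = p.coeff (n - 1) + n * c * p.coeff n := by
  cases n with
  | zero => simp [coeff_taylor_of_natDegree_le hp le_rfl]
  | succ n =>
    have hdeg : (hasseDeriv n p).natDegree ≤ 1 :=
      (natDegree_hasseDeriv_le p n).trans (by omega)
    rw [add_tsub_cancel_right, taylor_coeff, eq_X_add_C_of_natDegree_le_one hdeg]
    simp only [eval_add, eval_mul, eval_C, eval_X, hasseDeriv_coeff]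
    simp only [add_comm 1 n, Nat.choose_succ_self_right, Nat.cast_add, Nat.cast_one, zero_add,
      Nat.choose_self, one_mul]
    ring

lemma natDegree_sub_taylor_le {p : R[X]} {n : ℕ} (hp : p.natDegree ≤ n) (c : R) :
    (p - taylor c p).natDegree ≤ n - 1 := by
  rw [natDegree_le_iff_coeff_eq_zero]
  intro k hk
  rw [coeff_sub, coeff_taylor_of_natDegree_le hp (by omega), sub_self]

lemma coeff_sub_taylor_pred {p : R[X]} {n : ℕ} (hp : p.natDegree ≤ n) (c : R) :
    (p - taylor c p).coeff (n - 1) = -(n * c * p.coeff n) := by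
  rw [coeff_sub, coeff_taylor_pred_of_natDegree_le hp]
  ring

end Taylor

section BackwardDiff

variable {R ι : Type*} [CommRing R]

noncomputable def mixedBackwardDiff (m : ι → R) (s : Finset ι) : R[X] →ₗ[R] R[X] :=
  ∑ S ∈ s.powerset, (-1 : R) ^ #S • taylor (-∑ i ∈ S, m i)

noncomputable def weightedBackwardDiff (m : ι → R) (s : Finset ι) : R[X] →ₗ[R] R[X] :=
  ∑ S ∈ s.powerset, ((-1 : R) ^ #S * ∑ i ∈ S, m i) • taylor (-∑ i ∈ S, m i)

variable (m : ι → R) (s : Finset ι)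

lemma mixedBackwardDiff_apply (p : R[X]) :
    mixedBackwardDiff m s p =
      ∑ S ∈ s.powerset, (-1 : R[X]) ^ #S * p.comp (X - C (∑ i ∈ S, m i)) := by
  simp [mixedBackwardDiff, taylor_apply, smul_eq_C_mul, sub_eq_add_neg]

lemma weightedBackwardDiff_apply (p : R[X]) :
    weightedBackwardDiff m s p =
      ∑ S ∈ s.powerset,
        (-1 : R[X]) ^ #S * (C (∑ i ∈ S, m i) * p.comp (X - C (∑ i ∈ S, m i))) := by
  simp [weightedBackwardDiff, taylor_apply, smul_eq_C_mul, sub_eq_add_neg, mul_assoc]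

lemma weightedBackwardDiff_eq (p : R[X]) :
    weightedBackwardDiff m s p = X * mixedBackwardDiff m s p - mixedBackwardDiff m s (X * p) := by
  simp only [weightedBackwardDiff, mixedBackwardDiff, LinearMap.sum_apply, LinearMap.smul_apply]
  rw [mul_sum, ← sum_sub_distrib]
  refine sum_congr rfl fun S _ => ?_
  simp only [smul_eq_C_mul, taylor_mul, taylor_X, map_mul, map_neg, map_pow, map_one]
  ring

lemma mixedBackwardDiff_insert [DecidableEq ι] {a : ι} (ha : a ∉ s) (p : R[X]) :
    mixedBackwardDiff m (insert a s) p = mixedBackwardDiff m s (p - taylor (-m a) p) := by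
  have hS : ∀ S ∈ s.powerset, a ∉ S := fun S hS h => ha (mem_powerset.1 hS h)
  simp only [mixedBackwardDiff, sum_powerset_insert ha, LinearMap.add_apply, LinearMap.sum_apply,
    LinearMap.smul_apply, map_sub, taylor_taylor]
  rw [sub_eq_add_neg, ← sum_neg_distrib]
  refine congrArg _ (sum_congr rfl fun S hSs => ?_)
  rw [card_insert_of_notMem (hS S hSs), sum_insert (hS S hSs), add_comm (m a), neg_add,
    pow_succ, mul_neg_one, neg_smul]

lemma natDegree_mixedBackwardDiff_le {p : R[X]} {n : ℕ} (hp : p.natDegree ≤ n) :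
    (mixedBackwardDiff m s p).natDegree ≤ n - #s := by
  classical
  induction s using Finset.induction_on generalizing n p with
  | empty => simpa [mixedBackwardDiff] using hp
  | insert a s ha ih =>
    rw [mixedBackwardDiff_insert m s ha, card_insert_of_notMem ha]
    exact (ih (natDegree_sub_taylor_le hp _)).trans (by omega)

lemma coeff_mixedBackwardDiff {p : R[X]} {n : ℕ} (hp : p.natDegree ≤ n) :
    (mixedBackwardDiff m s p).coeff (n - #s) = (∏ i ∈ s, m i) * n.descFactorial #s * p.coeff n := by
  classical
  induction s using Finset.induction_on generalizing n p with
  | empty => simp [mixedBackwardDiff]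
  | insert a s ha ih =>
    rw [mixedBackwardDiff_insert m s ha, card_insert_of_notMem ha,
      show n - (#s + 1) = n - 1 - #s by omega,
      ih (natDegree_sub_taylor_le hp _), coeff_sub_taylor_pred hp, prod_insert ha]
    cases n with
    | zero => simp
    | succ n =>
      rw [Nat.succ_descFactorial_succ]
      push_cast
      ring

lemma natDegree_weightedBackwardDiff_le {p : R[X]} {n : ℕ} (hs : #s ≤ n) (hp : p.natDegree ≤ n) :
    (weightedBackwardDiff m s p).natDegree ≤ n + 1 - #s := by
  rw [weightedBackwardDiff_eq]
  refine (natDegree_sub_le_of_le (natDegree_mul_le_of_le natDegree_X_le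
    (natDegree_mixedBackwardDiff_le m s hp)) (natDegree_mixedBackwardDiff_le m s
      (natDegree_mul_le_of_le natDegree_X_le hp))).trans (max_le (by omega) (by omega))

lemma natDegree_smul_mixedBackwardDiff_add_weightedBackwardDiff_le {b p : R[X]} {n : ℕ}
    (hs : #s < n) (hb : b.natDegree ≤ n) (hp : p.natDegree ≤ n - 1) (a : R) :
    (a • mixedBackwardDiff m s b + weightedBackwardDiff m s p).natDegree ≤ n - #s := by
  refine natDegree_add_le_of_degree_le ((natDegree_smul_le _ _).trans ?_) ?_
  · exact natDegree_mixedBackwardDiff_le m s hb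
  · simpa [show n - 1 + 1 = n by omega] using
      natDegree_weightedBackwardDiff_le m s (by omega) hp

end BackwardDiff

section Factorial

variable {K ι : Type*} [Field K] [CharZero K] (m : ι → K) (s : Finset ι)

lemma coeff_mixedBackwardDiff_of_coeff_eq_div_factorial {p : K[X]} {n : ℕ} (hs : #s ≤ n)
    (hp : p.natDegree ≤ n) {c : K} (hc : p.coeff n = c / n !) :
    (mixedBackwardDiff m s p).coeff (n - #s) = (∏ i ∈ s, m i) * c / (n - #s)! := by
  have hdesc : (n.descFactorial #s : K) ≠ 0 := by exact_mod_cast (Nat.descFactorial_pos.2 hs).ne'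
  rw [coeff_mixedBackwardDiff m s hp, hc, ← Nat.factorial_mul_descFactorial hs]
  push_cast
  field_simp

lemma coeff_weightedBackwardDiff_of_coeff_eq_div_factorial {p : K[X]} {n : ℕ} (hs : #s ≤ n)
    (hp : p.natDegree ≤ n) {c : K} (hc : p.coeff n = c / n !) :
    (weightedBackwardDiff m s p).coeff (n + 1 - #s) =
      -(#s * (∏ i ∈ s, m i) * c / (n + 1 - #s)!) := by
  have hXp : (X * p).natDegree ≤ n + 1 := by
    simpa [add_comm] using natDegree_mul_le_of_le natDegree_X_le hp
  have hXc : (X * p).coeff (n + 1) = (n + 1) * c / (n + 1)! := by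
    rw [coeff_X_mul, hc, Nat.factorial_succ]
    push_cast
    field_simp
  rw [weightedBackwardDiff_eq, coeff_sub,
    coeff_mixedBackwardDiff_of_coeff_eq_div_factorial m s (by omega) hXp hXc]
  obtain ⟨k, rfl⟩ : ∃ k, n = k + #s := ⟨n - #s, by omega⟩
  have hΔp := coeff_mixedBackwardDiff_of_coeff_eq_div_factorial m s hs hp hc
  rw [Nat.add_sub_cancel] at hΔp
  rw [show k + #s + 1 - #s = k + 1 by omega, coeff_X_mul, hΔp, Nat.factorial_succ]
  push_cast
  field_simp
  ring

lemma coeff_smul_mixedBackwardDiff_add_weightedBackwardDiff {b p : K[X]} {n : ℕ} (hs : #s < n)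
    (hb : b.natDegree ≤ n) (hbc : b.coeff n = 1 / n !)
    (hp : p.natDegree ≤ n - 1) (hpc : p.coeff (n - 1) = 1 / (n - 1)!) (a : K) :
    (a • mixedBackwardDiff m s b + weightedBackwardDiff m s p).coeff (n - #s) =
      (∏ i ∈ s, m i) * (a - #s) / (n - #s)! := by
  have hΔb := coeff_mixedBackwardDiff_of_coeff_eq_div_factorial m s hs.le hb hbc
  have hWp := coeff_weightedBackwardDiff_of_coeff_eq_div_factorial m s (by omega) hp hpc
  rw [show n - 1 + 1 = n by omega] at hWp
  rw [coeff_add, coeff_smul, hΔb, hWp, smul_eq_mul]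
  ring

end Factorial

section Product

variable {R : Type*} [CommRing R]

lemma natDegree_X_add_C_le (b : R) : (X + C b).natDegree ≤ 1 :=
  natDegree_add_le_of_degree_le natDegree_X_le (by simp)

lemma natDegree_C_mul_prod_range_X_add_C_le (a : R) (b : ℕ → R) (n : ℕ) :
    (C a * ∏ j ∈ range n, (X + C (b j))).natDegree ≤ n := by
  simpa using (natDegree_C_mul_le _ _).trans <| (natDegree_prod_le (range n) _).trans
    (sum_le_card_nsmul (range n) _ 1 fun j _ => natDegree_X_add_C_le (b j))

lemma coeff_C_mul_prod_range_X_add_C (a : R) (b : ℕ → R) (n : ℕ) :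
    (C a * ∏ j ∈ range n, (X + C (b j))).coeff n = a := by
  have h := coeff_prod_of_natDegree_le (range n) _ 1 fun j _ => natDegree_X_add_C_le (b j)
  simp only [card_range, mul_one, coeff_add, coeff_X_one, coeff_C_succ, add_zero, prod_const_one]
    at h
  rw [coeff_C_mul, h, mul_one]

end Product

end Polynomial

theorem genus_derivative_weight_coeffs_general (f q r : ℕ)
    (hr : 0 < r) (hre : r ≤ f + q - 1) (e : ℕ) (he : e = f + q)
    (dF dQ : ℤ) (m : Fin r → ℕ) (g₁ g₂ : ℚ) :
    let μF : ℚ := (dF : ℚ) / (f : ℚ)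
    let μQ : ℚ := (dQ : ℚ) / (q : ℚ)
    let μE : ℚ := ((dF : ℚ) + (dQ : ℚ)) / (e : ℚ)
    let H : ℚ → Polynomial ℚ := fun g =>
      C (1 / ((e - 1).factorial : ℚ)) *
        (∏ j ∈ Finset.range (e - 1), (X + C ((j : ℚ) + 1))) *
        (-(C μE) * X + C (1 - g))
    let B : ℕ → Polynomial ℚ := fun n =>
      C (1 / (n.factorial : ℚ)) * ∏ j ∈ Finset.range n, (X + C ((e : ℚ) - 1 - (j : ℚ)))
    let T : ℚ → Polynomial ℚ := fun g =>
      C ((f : ℚ) * ((f : ℚ) + 1) * μF + (f : ℚ) * (q : ℚ) * μQ) * B (e + 1)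
        + C ((μF - (1 - g)) * (f : ℚ)) * B e
    let TrX : ℚ → Polynomial ℚ := fun g =>
      ∑ S : Finset (Fin r), (-1 : Polynomial ℚ) ^ S.card *
        ((T g).comp (X - C ((∑ i ∈ S, m i : ℕ) : ℚ))
          - C ((∑ i ∈ S, m i : ℕ) : ℚ) * (H g).comp (X - C ((∑ i ∈ S, m i : ℕ) : ℚ)))
    (TrX g₁).coeff (e - r + 1) = (TrX g₂).coeff (e - r + 1) ∧
    (TrX g₁).coeff (e - r) - (TrX g₂).coeff (e - r)
      = (∏ i, (m i : ℚ)) * ((f : ℚ) - (r : ℚ)) * (g₁ - g₂) / ((e - r).factorial : ℚ) := by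
  intro μF μQ μE H B T TrX
  set w : Fin r → ℚ := fun i => (m i : ℚ)
  set Δ := mixedBackwardDiff w univ
  set W := weightedBackwardDiff w univ
  set P : ℚ[X] := C (1 / ((e - 1).factorial : ℚ)) *
    ∏ j ∈ Finset.range (e - 1), (X + C ((j : ℚ) + 1)) with hP
  have hTrX : ∀ g, TrX g = Δ (T g) - W (H g) := fun g => by
    simp only [TrX, Δ, W, w, mixedBackwardDiff_apply, weightedBackwardDiff_apply, powerset_univ,
      Nat.cast_sum, ← sum_sub_distrib, mul_sub]
  have hT : T g₁ - T g₂ = ((g₁ - g₂) * f) • B e := by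
    simp only [T, smul_eq_C_mul, map_sub, map_mul]
    ring
  have hH : H g₁ - H g₂ = (g₂ - g₁) • P := by
    simp only [H, hP, smul_eq_C_mul, map_sub]
    ring
  have hdiff : TrX g₁ - TrX g₂ = (g₁ - g₂) • ((f : ℚ) • Δ (B e) + W P) := by
    rw [hTrX, hTrX, sub_sub_sub_comm, ← map_sub, ← map_sub, hT, hH, map_smul, map_smul]
    module
  have hr_lt : #(univ : Finset (Fin r)) < e := by rw [card_fin]; omega
  have hdeg := natDegree_smul_mixedBackwardDiff_add_weightedBackwardDiff_le w _ (b := B e) (p := P)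
    hr_lt (natDegree_C_mul_prod_range_X_add_C_le _ _ _)
    (natDegree_C_mul_prod_range_X_add_C_le _ _ _) (f : ℚ)
  have hcoeff := coeff_smul_mixedBackwardDiff_add_weightedBackwardDiff w _ (b := B e) (p := P)
    hr_lt (natDegree_C_mul_prod_range_X_add_C_le _ _ _) (coeff_C_mul_prod_range_X_add_C _ _ _)
    (natDegree_C_mul_prod_range_X_add_C_le _ _ _) (coeff_C_mul_prod_range_X_add_C _ _ _) (f : ℚ)
  rw [card_fin] at hdeg hcoeff
  constructor
  · rw [← sub_eq_zero, ← coeff_sub, hdiff, coeff_smul,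
      coeff_eq_zero_of_natDegree_lt (hdeg.trans_lt (Nat.lt_succ_self _)), smul_zero]
  · rw [← coeff_sub, hdiff, coeff_smul, hcoeff, smul_eq_mul]
    ring

/-- Genus dependence of the total weight coefficients of the complete intersection: for
`Tr_{X,g} = ∑_{S⊆{1,…,r}} (−1)^{|S|}(T_g(x−σ_S) − σ_S·H_g(x−σ_S))`, the coefficient of
`x^{e−r+1}` is independent of `g` (i.e. `∂_g a₀ = 0`) and
`coeff_{e−r}(Tr_{X,g₁}) − coeff_{e−r}(Tr_{X,g₂}) = (∏ m_i)·(f−r)·(g₁−g₂)/(e−r)!`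
(i.e. `∂_g a₁ = (∏ m_i)(f−r)/(e−r)!`); here `e = f+q`, `μ_F = d_F/f`, `μ_Q = d_Q/q`,
`μ_E = (d_F+d_Q)/e`. -/
theorem genus_derivative_weight_coeffs (f q r : ℕ) (hf : 0 < f) (hq : 0 < q)
    (hr : 0 < r) (hre : r ≤ f + q - 1) (e : ℕ) (he : e = f + q)
    (dF dQ : ℤ) (m : Fin r → ℕ) (hm : ∀ i, 0 < m i) (g₁ g₂ : ℚ) :
    let μF : ℚ := (dF : ℚ) / (f : ℚ)
    let μQ : ℚ := (dQ : ℚ) / (q : ℚ)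
    let μE : ℚ := ((dF : ℚ) + (dQ : ℚ)) / (e : ℚ)
    let H : ℚ → Polynomial ℚ := fun g =>
      C (1 / ((e - 1).factorial : ℚ)) *
        (∏ j ∈ Finset.range (e - 1), (X + C ((j : ℚ) + 1))) *
        (-(C μE) * X + C (1 - g))
    let B : ℕ → Polynomial ℚ := fun n =>
      C (1 / (n.factorial : ℚ)) * ∏ j ∈ Finset.range n, (X + C ((e : ℚ) - 1 - (j : ℚ)))
    let T : ℚ → Polynomial ℚ := fun g =>
      C ((f : ℚ) * ((f : ℚ) + 1) * μF + (f : ℚ) * (q : ℚ) * μQ) * B (e + 1)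
        + C ((μF - (1 - g)) * (f : ℚ)) * B e
    let TrX : ℚ → Polynomial ℚ := fun g =>
      ∑ S : Finset (Fin r), (-1 : Polynomial ℚ) ^ S.card *
        ((T g).comp (X - C ((∑ i ∈ S, m i : ℕ) : ℚ))
          - C ((∑ i ∈ S, m i : ℕ) : ℚ) * (H g).comp (X - C ((∑ i ∈ S, m i : ℕ) : ℚ)))
    (TrX g₁).coeff (e - r + 1) = (TrX g₂).coeff (e - r + 1) ∧
    (TrX g₁).coeff (e - r) - (TrX g₂).coeff (e - r)
      = (∏ i, (m i : ℚ)) * ((f : ℚ) - (r : ℚ)) * (g₁ - g₂) / ((e - r).factorial : ℚ) :=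
  genus_derivative_weight_coeffs_general f q r hr hre e he dF dQ m g₁ g₂
end
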